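/- arXiv:2310.18860 — 2 statements merged into one kernel-verified Lean document; each statement's English description precedes it below -/
import Mathlib

section
/- Let φ ∈ ℝᵖ and χ ∈ ℝ, and suppose A = XᵀX + χ²I_p is positive definite and φᵀ(XᵀX/χ² + I_p)⁻¹φ < ‖φ‖²/4 with χ ≠ 0. Then the (p+1)×(p+1) symmetric block matrix [[XᵀX + χ²I_p, 2χφ],[2χφᵀ, ‖φ‖²]] is positive definite. -/
/-!
The Schur complement of `A = XᵀX + χ²I` in the block matrix is the `1 × 1` matrix
`‖φ‖² - 4χ² φᵀA⁻¹φ`. Since `A = χ² (XᵀX/χ² + I)`, we have `χ² A⁻¹ = (XᵀX/χ² + I)⁻¹`, so the Schur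
complement is `‖φ‖² - 4 φᵀ(XᵀX/χ² + I)⁻¹φ > 0`, and the Schur complement criterion applies.
-/

open Matrix

namespace Matrix

lemma posDef_of_unique {ι R : Type*} [Fintype ι] [Unique ι] [DecidableEq ι] [CommRing R]
    [PartialOrder R] [StarRing R] [StarOrderedRing R] [NoZeroDivisors R] [Nontrivial R]
    {M : Matrix ι ι R} (h : 0 < M default default) : M.PosDef := by
  have hM : M = M default default • (1 : Matrix ι ι R) := by
    ext i j
    simp [Subsingleton.elim i default, Subsingleton.elim j default]
  rw [hM]
  exact PosDef.one.smul h

open scoped ComplexOrder in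
/-- Mathlib's Schur complement criterion gives semidefiniteness; definiteness follows because
`det (fromBlocks A B Bᴴ D) = det A * det (D - Bᴴ A⁻¹ B) ≠ 0`. -/
lemma posDef_fromBlocks₁₁ {m n 𝕜 : Type*} [Fintype m] [Fintype n] [DecidableEq m]
    [DecidableEq n] [RCLike 𝕜] {A : Matrix m m 𝕜} (B : Matrix m n 𝕜) {D : Matrix n n 𝕜}
    (hA : A.PosDef) (hS : (D - Bᴴ * A⁻¹ * B).PosDef) : (fromBlocks A B Bᴴ D).PosDef := by
  let := hA.isUnit.invertible
  refine ((PosDef.fromBlocks₁₁ B D hA).2 hS.posSemidef).posDef_iff_det_ne_zero.2 ?_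
  rw [det_fromBlocks₁₁, invOf_eq_nonsing_inv]
  exact mul_ne_zero hA.det_pos.ne' hS.det_pos.ne'

lemma conjTranspose_replicateCol_mul_mul_replicateCol {ι m R : Type*} [Fintype m]
    [CommSemiring R] [StarRing R] (A : Matrix m m R) (v : m → R) :
    (replicateCol ι v)ᴴ * A * replicateCol ι v = of fun _ _ => star v ⬝ᵥ A *ᵥ v := by
  ext
  simp [← replicateRow_vecMul, dotProduct_mulVec]

end Matrix

/-- The Hessian block matrix [[XᵀX + χ²I, 2χφ],[2χφᵀ, ‖φ‖²]] is positive definite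
when χ ≠ 0 and φᵀ(XᵀX/χ² + I)⁻¹φ < ‖φ‖²/4. -/
theorem hessian_block_posDef (n p : ℕ)
    (X : Matrix (Fin n) (Fin p) ℝ) (φ : Fin p → ℝ) (χ : ℝ) (hχ : χ ≠ 0)
    (hA : (Xᵀ * X + χ ^ 2 • (1 : Matrix (Fin p) (Fin p) ℝ)).PosDef)
    (hschur : φ ⬝ᵥ ((χ⁻¹ ^ 2 • (Xᵀ * X) + (1 : Matrix (Fin p) (Fin p) ℝ))⁻¹.mulVec φ)
        < (∑ j, (φ j) ^ 2) / 4)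
    (M : Matrix (Fin p ⊕ Unit) (Fin p ⊕ Unit) ℝ)
    (hM : M = Matrix.of fun i j =>
      match i, j with
      | Sum.inl i, Sum.inl j => (Xᵀ * X + χ ^ 2 • (1 : Matrix (Fin p) (Fin p) ℝ)) i j
      | Sum.inl i, Sum.inr _ => 2 * χ * φ i
      | Sum.inr _, Sum.inl j => 2 * χ * φ j
      | Sum.inr _, Sum.inr _ => ∑ j, (φ j) ^ 2) :
    M.PosDef := by
  set A := Xᵀ * X + χ ^ 2 • (1 : Matrix (Fin p) (Fin p) ℝ)
  set v := (2 * χ) • φ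
  have hM_blocks : M = fromBlocks A (replicateCol Unit v) (replicateCol Unit v)ᴴ
      (of fun _ _ => ∑ j, φ j ^ 2) := by
    subst hM
    ext (i | i) (j | j) <;> simp [v, mul_assoc]
  have hC : χ⁻¹ ^ 2 • (Xᵀ * X) + 1 = χ⁻¹ ^ 2 • A := by
    simp [A, smul_add, smul_smul, hχ]
  let _ : Invertible (χ⁻¹ ^ 2) := invertibleOfNonzero (by positivity)
  have hC_inv : (χ⁻¹ ^ 2 • (Xᵀ * X) + 1)⁻¹ = χ ^ 2 • A⁻¹ := by
    rw [hC, Matrix.inv_smul _ _ ((isUnit_iff_isUnit_det _).1 hA.isUnit)]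
    simp
  rw [hC_inv, smul_mulVec, dotProduct_smul, smul_eq_mul] at hschur
  rw [hM_blocks]
  refine posDef_fromBlocks₁₁ _ hA (posDef_of_unique ?_)
  rw [conjTranspose_replicateCol_mul_mul_replicateCol]
  simp only [Matrix.sub_apply, of_apply, v, star_trivial, mulVec_smul, dotProduct_smul,
    smul_dotProduct, smul_eq_mul]
  linarith
end

section
/- In the multiple means problem, the stationarity condition of the EM update yields κ = (p+2)/s: precisely, for p ∈ ℕ, s > 0, and κ ∈ (0,1), setting w = (1−κ)²s + (1−κ)p and τ² = (1−κ)/κ, the equation (w − p + √(p² + 8w + 2pw + w²))/(2(2+p)) = (1−κ)/κ holds if and only if κ = (p+2)/s, provided s > p + 2. -/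
/-- In the multiple means problem, the EM stationarity equation
(w − p + √(p² + 8w + 2pw + w²))/(2(2+p)) = (1−κ)/κ holds iff κ = (p+2)/s,
where w = (1−κ)²s + (1−κ)p, provided s > p + 2 and κ ∈ (0,1). -/
theorem multiple_means_kappa (p : ℕ) (s κ : ℝ)
    (hs : (p : ℝ) + 2 < s) (hκ0 : 0 < κ) (hκ1 : κ < 1)
    (w : ℝ) (hw : w = (1 - κ) ^ 2 * s + (1 - κ) * p) :
    (w - p + Real.sqrt ((p : ℝ) ^ 2 + 8 * w + 2 * p * w + w ^ 2)) / (2 * (2 + p))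
        = (1 - κ) / κ
      ↔ κ = ((p : ℝ) + 2) / s := by
  have hp0 : (0:ℝ) ≤ (p:ℝ) := Nat.cast_nonneg p
  have hs0 : (0:ℝ) < s := by linarith
  have hu : (0:ℝ) < 1 - κ := by linarith
  have hden : (0:ℝ) < 2 * (2 + (p:ℝ)) := by linarith
  set D : ℝ := (p : ℝ) ^ 2 + 8 * w + 2 * p * w + w ^ 2 with hD
  set A : ℝ := 2 * (2 + (p:ℝ)) * ((1 - κ) / κ) - (w - p) with hA
  have hw0 : 0 < w := by
    rw [hw]
    have : 0 < (1 - κ)^2 * s := by positivity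
    nlinarith [mul_nonneg hu.le hp0]
  have hD0 : 0 ≤ D := by rw [hD]; nlinarith
  -- key algebraic identity
  have hkey : D - A ^ 2 = 4 * (2 + p) * (1 - κ)^2 * (κ * s - (p + 2)) / κ ^ 2 := by
    rw [hD, hA, hw]
    field_simp
    ring
  constructor
  · intro h
    have hAs : Real.sqrt D = A := by
      rw [hA]
      have := (div_eq_iff hden.ne').mp h
      linarith [this]
    have hDA : D = A ^ 2 := by
      rw [← hAs, Real.sq_sqrt hD0]
    have h1 : 4 * (2 + (p:ℝ)) * (1 - κ)^2 * (κ * s - (p + 2)) = (D - A ^ 2) * κ ^ 2 := by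
      rw [hkey]; field_simp
    rw [hDA, sub_self, zero_mul] at h1
    have hc : (0:ℝ) < 4 * (2 + (p:ℝ)) * (1 - κ)^2 := by positivity
    have h0 : κ * s - ((p:ℝ) + 2) = 0 := by
      have := mul_eq_zero.mp (by linarith : 4 * (2 + (p:ℝ)) * (1 - κ)^2 * (κ * s - (p + 2)) = 0)
      exact this.resolve_left hc.ne'
    field_simp
    linarith
  · intro h
    have hκs : κ * s = (p:ℝ) + 2 := by
      rw [h]; field_simp
    have hA0 : 0 ≤ A := by
      -- A = s - 2κ
      have : A = s - 2 * κ := by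
        rw [hA, hw]
        field_simp
        nlinarith [hκs]
      rw [this]; linarith
    have hDA : D = A ^ 2 := by
      have : κ * s - ((p:ℝ) + 2) = 0 := by linarith
      rw [this] at hkey; simp at hkey; linarith
    have hAs : Real.sqrt D = A := by
      rw [hDA, Real.sqrt_sq hA0]
    rw [hAs, hA]
    field_simp
    ring
end
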